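/- Let m₀ < m be natural numbers, let η : ℕ → ℝ, and define 𝒴 : ℕ → ℂ by 𝒴(m₀) = 1 and 𝒴(k) = 𝒴(k−1)·(1 + i·η(k)) for k ≥ m₀ + 1. Then 2·log|𝒴(m)| = ∑_{k=m₀+1}^{m} log(1 + η(k)²). -/

import Mathlib

open Complex Finset

theorem eq_prod_Icc_of_eq_mul {M : Type*} [CommMonoid M] {f g : ℕ → M} {a : ℕ} (h₀ : f a = 1)
    (hrec : ∀ k, a + 1 ≤ k → f k = f (k - 1) * g k) :
    ∀ n, a ≤ n → f n = ∏ k ∈ Icc (a + 1) n, g k := by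
  intro n hn
  induction n, hn using Nat.le_induction with
  | base => simp [h₀]
  | succ n hn ih =>
    rw [hrec (n + 1) (by omega), Nat.add_sub_cancel, ih, prod_Icc_succ_top (by omega)]

theorem Complex.normSq_one_add_I_mul_ofReal (x : ℝ) : normSq (1 + I * x) = 1 + x ^ 2 := by
  simp [normSq_apply, sq]

/-- Discrete-time counterpart of Theorem 1: twice the log-modulus of the terminal
value of the discretized process equals `∑ log(1 + η(k)²)`. -/
theorem two_log_abs_discretized_process
    (m₀ m : ℕ) (hm : m₀ < m) (η : ℕ → ℝ) (𝒴 : ℕ → ℂ)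
    (h0 : 𝒴 m₀ = 1)
    (hrec : ∀ k, m₀ + 1 ≤ k → 𝒴 k = 𝒴 (k - 1) * (1 + Complex.I * (η k : ℂ))) :
    2 * Real.log ‖𝒴 m‖
      = ∑ k ∈ Finset.Icc (m₀ + 1) m, Real.log (1 + η k ^ 2) := by
  have h𝒴 : 𝒴 m = ∏ k ∈ Icc (m₀ + 1) m, (1 + I * (η k : ℂ)) :=
    eq_prod_Icc_of_eq_mul h0 hrec m hm.le
  calc 2 * Real.log ‖𝒴 m‖ = Real.log (normSq (𝒴 m)) := by
        rw [normSq_eq_norm_sq, Real.log_pow, Nat.cast_ofNat]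
    _ = Real.log (∏ k ∈ Icc (m₀ + 1) m, (1 + η k ^ 2)) := by
        simp only [h𝒴, map_prod, normSq_one_add_I_mul_ofReal]
    _ = ∑ k ∈ Icc (m₀ + 1) m, Real.log (1 + η k ^ 2) :=
        Real.log_prod fun k _ => by positivity
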